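/- arXiv:1211.3292 — 6 statements merged into one kernel-verified Lean document; each statement's English description precedes it below -/
import Mathlib

section
/- Let α ∈ ℝ, β ∈ [0,1), and γ, δ ∈ ℝ with δ ≥ |γ|, let X be any real number, and set c = γX + δ|X| (so c ≥ 0). Then the inverted EGARCH(1,1) map φ is Lipschitz on [α/(1−β), ∞) with constant max{β, (c/2)·exp(−α/(2(1−β))) − β}: for all x, y ≥ α/(1−β), |φ(x) − φ(y)| ≤ max{β, (c/2)·exp(−α/(2(1−β))) − β} · |x − y|. -/
open Real Set

lemma mul_add_mul_abs_nonneg {γ δ : ℝ} (hδγ : |γ| ≤ δ) (X : ℝ) : 0 ≤ γ * X + δ * |X| := by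
  have h : |γ * X| ≤ δ * |X| := by
    rw [abs_mul]
    exact mul_le_mul_of_nonneg_right hδγ (abs_nonneg X)
  linarith [neg_abs_le (γ * X)]

lemma abs_sub_le_max_of_mem_Icc {b v V : ℝ} (hv : v ∈ Icc 0 V) : |b - v| ≤ max b (V - b) := by
  rw [abs_le]
  constructor <;> linarith [hv.1, hv.2, le_max_left b (V - b), le_max_right b (V - b)]

lemma hasDerivAt_add_mul_add_mul_exp_neg_half (a b c t : ℝ) :
    HasDerivAt (fun t => a + b * t + c * exp (-t / 2)) (b - c / 2 * exp (-t / 2)) t := by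
  have hexp : HasDerivAt (fun t => exp (-t / 2)) (exp (-t / 2) * (-1 / 2)) t :=
    ((hasDerivAt_id t).neg.div_const 2).exp
  exact (((hasDerivAt_const t a).add ((hasDerivAt_id t).const_mul b)).add
    (hexp.const_mul c)).congr_deriv (by ring)

/-- Mean value inequality: on `[m, ∞)` the derivative `b - (c/2) exp(-t/2)` lies between
`b - (c/2) exp(-m/2)` and `b`. -/
lemma abs_add_mul_add_mul_exp_neg_half_sub_le {a b c m x y : ℝ} (hc : 0 ≤ c)
    (hx : m ≤ x) (hy : m ≤ y) :
    |(a + b * x + c * exp (-x / 2)) - (a + b * y + c * exp (-y / 2))| ≤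
      max b (c / 2 * exp (-m / 2) - b) * |x - y| := by
  have hderiv : ∀ t ∈ Ici m, HasDerivWithinAt (fun t => a + b * t + c * exp (-t / 2))
      (b - c / 2 * exp (-t / 2)) (Ici m) t :=
    fun t _ => (hasDerivAt_add_mul_add_mul_exp_neg_half a b c t).hasDerivWithinAt
  have hbound : ∀ t ∈ Ici m, ‖b - c / 2 * exp (-t / 2)‖ ≤ max b (c / 2 * exp (-m / 2) - b) :=
    fun t ht => abs_sub_le_max_of_mem_Icc ⟨by positivity, by gcongr; exact ht⟩
  simpa only [Real.norm_eq_abs] using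
    (convex_Ici m).norm_image_sub_le_of_norm_hasDerivWithin_le hderiv hbound hy hx

theorem egarch_inverted_map_lipschitz_general
    (α β γ δ X : ℝ) (hδγ : δ ≥ |γ|)
    (x y : ℝ) (hx : α / (1 - β) ≤ x) (hy : α / (1 - β) ≤ y) :
    |(α + β * x + (γ * X + δ * |X|) * Real.exp (-x / 2)) -
        (α + β * y + (γ * X + δ * |X|) * Real.exp (-y / 2))| ≤
      max β ((γ * X + δ * |X|) / 2 * Real.exp (-α / (2 * (1 - β))) - β) * |x - y| := by
  have hm : -α / (2 * (1 - β)) = -(α / (1 - β)) / 2 := by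
    rw [mul_comm, ← div_div, neg_div]
  rw [hm]
  exact abs_add_mul_add_mul_exp_neg_half_sub_le (mul_add_mul_abs_nonneg hδγ X) hx hy

/-- The inverted EGARCH(1,1) map `φ(x) = α + βx + c·exp(-x/2)` with
`c = γX + δ|X| ≥ 0` is Lipschitz on `[α/(1-β), ∞)` with constant
`max{β, (c/2)·exp(-α/(2(1-β))) - β}`. -/
theorem egarch_inverted_map_lipschitz
    (α β γ δ X : ℝ) (hβ0 : 0 ≤ β) (hβ1 : β < 1) (hδγ : δ ≥ |γ|)
    (x y : ℝ) (hx : α / (1 - β) ≤ x) (hy : α / (1 - β) ≤ y) :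
    |(α + β * x + (γ * X + δ * |X|) * Real.exp (-x / 2)) -
        (α + β * y + (γ * X + δ * |X|) * Real.exp (-y / 2))| ≤
      max β ((γ * X + δ * |X|) / 2 * Real.exp (-α / (2 * (1 - β))) - β) * |x - y| :=
  egarch_inverted_map_lipschitz_general α β γ δ X hδγ x y hx hy
end

section
/- Let Θ be a compact metric space, (Ω, ℱ, μ) a probability space, and Λ : Ω × Θ → (0, ∞) a function such that for μ-almost every ω the map θ ↦ Λ(ω, θ) is continuous, for each θ the map ω ↦ Λ(ω, θ) is measurable, and 𝔼[sup_{θ∈Θ} log⁺ Λ(·, θ)] < ∞. Let θ₀ ∈ Θ satisfy 𝔼[log Λ(·, θ₀)] < 0 (possibly equal to −∞). Then there exists ε > 0 such that 𝔼[log sup_{θ∈ B̄(θ₀,ε)∩Θ} Λ(·, θ)] < 0, where B̄(θ₀, ε) is the closed ball of radius ε centered at θ₀. -/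
open MeasureTheory Filter Topology Set
open scoped ENNReal NNReal

lemma ennreal_aux (r M : ℝ) (hM : 0 ≤ M) :
    ENNReal.ofReal (r + M) + min (ENNReal.ofReal (-r)) (ENNReal.ofReal M) =
      ENNReal.ofReal r + ENNReal.ofReal M := by
  rcases le_total 0 r with hr | hr
  · have h0 : ENNReal.ofReal (-r) = 0 := ENNReal.ofReal_of_nonpos (by linarith)
    simp [h0, ENNReal.ofReal_add hr hM]
  · rcases le_total (-M) r with hr2 | hr2
    · have h0 : ENNReal.ofReal r = 0 := ENNReal.ofReal_of_nonpos hr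
      rw [min_eq_left (ENNReal.ofReal_le_ofReal (by linarith)), h0, zero_add,
        ← ENNReal.ofReal_add (by linarith) (by linarith)]
      ring_nf
    · have h0 : ENNReal.ofReal r = 0 := ENNReal.ofReal_of_nonpos hr
      have h1 : ENNReal.ofReal (r + M) = 0 := ENNReal.ofReal_of_nonpos (by linarith)
      rw [min_eq_right (ENNReal.ofReal_le_ofReal (by linarith)), h0, h1]

lemma iSup_min_nat (x : ℝ≥0∞) (hx : x ≠ ∞) : ⨆ n : ℕ, min x (n : ℝ≥0∞) = x := by
  apply le_antisymm (iSup_le fun n => min_le_left _ _)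
  obtain ⟨n, hn⟩ := ENNReal.exists_nat_gt hx
  calc x = min x (n : ℝ≥0∞) := (min_eq_left hn.le).symm
  _ ≤ _ := le_iSup (fun n : ℕ => min x (n : ℝ≥0∞)) n

lemma ciSup_eq_of_denseRange {X : Type*} [MetricSpace X] {S : Set X} (hS : IsCompact S)
    [Nonempty S] (v : ℕ → S) (hv : DenseRange v) {h : X → ℝ} (hh : Continuous h) :
    ⨆ θ : S, h θ = ⨆ n, h (v n) := by
  have hbdd : BddAbove (range fun θ : S => h θ.1) := by
    rw [← Set.image_eq_range]
    exact hS.bddAbove_image hh.continuousOn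
  have hsub : (range fun n => h (v n)) ⊆ range fun θ : S => h θ.1 := by
    rintro - ⟨n, rfl⟩; exact ⟨v n, rfl⟩
  have hbdd2 : BddAbove (range fun n => h (v n)) := hbdd.mono hsub
  apply le_antisymm
  · refine ciSup_le fun θ => ?_
    have hθ : (θ : S) ∈ closure (range v) := by
      rw [hv.closure_eq]; trivial
    obtain ⟨u, hu1, hu2⟩ := mem_closure_iff_seq_limit.1 hθ
    have hcont2 : Tendsto (fun n => h (u n)) atTop (𝓝 (h θ)) :=
      ((hh.comp continuous_subtype_val).continuousAt.tendsto).comp hu2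
    refine le_of_tendsto hcont2 (Filter.Eventually.of_forall fun n => ?_)
    obtain ⟨k, hk⟩ := hu1 n
    calc h (u n) = h (v k) := by rw [hk]
    _ ≤ _ := le_ciSup hbdd2 k
  · exact ciSup_le fun n => le_ciSup hbdd (v n)

lemma key_lintegral {Ω : Type*} [MeasurableSpace Ω] (μ : Measure Ω) [IsProbabilityMeasure μ]
    (f : Ω → ℝ) (hf : AEMeasurable f μ) (M : ℝ) (hM : 0 ≤ M) :
    ∫⁻ ω, ENNReal.ofReal (f ω + M) ∂μ
      + ∫⁻ ω, min (ENNReal.ofReal (-f ω)) (ENNReal.ofReal M) ∂μ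
      = ∫⁻ ω, ENNReal.ofReal (f ω) ∂μ + ENNReal.ofReal M := by
  have ha : AEMeasurable (fun ω => ENNReal.ofReal (f ω + M)) μ :=
    ENNReal.measurable_ofReal.comp_aemeasurable (hf.add aemeasurable_const)
  rw [← lintegral_add_left' ha]
  have hpt : ∀ ω, ENNReal.ofReal (f ω + M) + min (ENNReal.ofReal (-f ω)) (ENNReal.ofReal M)
      = ENNReal.ofReal (f ω) + ENNReal.ofReal M := fun ω => ennreal_aux _ _ hM
  simp_rw [hpt]
  rw [lintegral_add_right' _ aemeasurable_const, lintegral_const, measure_univ, mul_one]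

/-- The pointwise Lyapunov condition extends to a uniform one on a small closed ball:
if `𝔼[sup_θ log⁺ Λ(·,θ)] < ∞` and `𝔼[log Λ(·,θ₀)] < 0` (possibly `-∞`, expressed via
separate upper integrals of the positive and negative parts), then for some `ε > 0`
also `𝔼[log sup_{θ ∈ B̄(θ₀,ε)} Λ(·,θ)] < 0`. -/
theorem pointwise_lyapunov_to_local_uniform
    {Θ : Type*} [MetricSpace Θ] [CompactSpace Θ] [Nonempty Θ]
    {Ω : Type*} [MeasurableSpace Ω] (μ : Measure Ω) [IsProbabilityMeasure μ]
    (Λ : Ω → Θ → ℝ) (hpos : ∀ ω θ, 0 < Λ ω θ)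
    (hcont : ∀ᵐ ω ∂μ, Continuous (Λ ω))
    (hmeas : ∀ θ, Measurable fun ω => Λ ω θ)
    (hlogplus : Integrable (fun ω => ⨆ θ, max (Real.log (Λ ω θ)) 0) μ)
    (θ₀ : Θ)
    (hneg : (∫⁻ ω, ENNReal.ofReal (Real.log (Λ ω θ₀)) ∂μ) <
      ∫⁻ ω, ENNReal.ofReal (-Real.log (Λ ω θ₀)) ∂μ) :
    ∃ ε > (0 : ℝ),
      (∫⁻ ω, ENNReal.ofReal
          (Real.log (⨆ θ : Metric.closedBall θ₀ ε, Λ ω θ.1)) ∂μ) <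
        ∫⁻ ω, ENNReal.ofReal
          (-Real.log (⨆ θ : Metric.closedBall θ₀ ε, Λ ω θ.1)) ∂μ := by
  classical
  set G : Ω → ℝ := fun ω => ⨆ θ, max (Real.log (Λ ω θ)) 0 with hGdef
  set f₀ : Ω → ℝ := fun ω => Real.log (Λ ω θ₀) with hf₀def
  have hf₀m : Measurable f₀ := Real.measurable_log.comp (hmeas θ₀)
  set ε : ℕ → ℝ := fun n => 1 / ((n : ℝ) + 1) with hεdef
  have hεpos : ∀ n, 0 < ε n := fun n => by positivity
  have hmem : ∀ n, θ₀ ∈ Metric.closedBall θ₀ (ε n) :=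
    fun n => Metric.mem_closedBall_self (hεpos n).le
  have hne : ∀ n, Nonempty (Metric.closedBall θ₀ (ε n)) := fun n => ⟨⟨θ₀, hmem n⟩⟩
  have hcomp : ∀ n, IsCompact (Metric.closedBall θ₀ (ε n)) :=
    fun n => Metric.isClosed_closedBall.isCompact
  set F : ℕ → Ω → ℝ := fun n ω => ⨆ θ : Metric.closedBall θ₀ (ε n), Λ ω θ.1 with hFdef
  set f : ℕ → Ω → ℝ := fun n ω => Real.log (F n ω) with hfdef
  -- pointwise facts on the continuity set
  have hptwise : ∀ᵐ ω ∂μ, (∀ n, f n ω ≤ G ω) ∧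
      Tendsto (fun n => f n ω) atTop (𝓝 (f₀ ω)) := by
    filter_upwards [hcont] with ω hc
    have hbdd : ∀ n, BddAbove (range fun θ : Metric.closedBall θ₀ (ε n) => Λ ω θ.1) := by
      intro n; rw [← Set.image_eq_range]
      exact (hcomp n).bddAbove_image hc.continuousOn
    have hFlb : ∀ n, Λ ω θ₀ ≤ F n ω := fun n =>
      le_ciSup (hbdd n) (⟨θ₀, hmem n⟩ : Metric.closedBall θ₀ (ε n))
    have hFpos : ∀ n, 0 < F n ω := fun n => lt_of_lt_of_le (hpos ω θ₀) (hFlb n)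
    have hGbdd : BddAbove (range fun θ => max (Real.log (Λ ω θ)) 0) := by
      rw [← Set.image_univ]
      refine isCompact_univ.bddAbove_image ?_
      exact ((hc.log fun θ => (hpos ω θ).ne').max continuous_const).continuousOn
    have hΛle : ∀ θ, Λ ω θ ≤ Real.exp (G ω) := by
      intro θ
      have h1 : Real.log (Λ ω θ) ≤ G ω :=
        le_trans (le_max_left _ _) (le_ciSup hGbdd θ)
      calc Λ ω θ = Real.exp (Real.log (Λ ω θ)) := (Real.exp_log (hpos ω θ)).symm
      _ ≤ _ := Real.exp_le_exp.2 h1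
    have hFub : ∀ n, F n ω ≤ Real.exp (G ω) := fun n =>
      haveI := hne n
      ciSup_le fun θ => hΛle θ.1
    refine ⟨fun n => (Real.log_le_iff_le_exp (hFpos n)).2 (hFub n), ?_⟩
    have hFt : Tendsto (fun n => F n ω) atTop (𝓝 (Λ ω θ₀)) := by
      rw [Metric.tendsto_atTop]
      intro δ hδ
      obtain ⟨r, hr, hball⟩ :=
        Metric.continuousAt_iff.1 (hc.continuousAt (x := θ₀)) (δ/2) (by linarith)
      obtain ⟨N, hN⟩ := exists_nat_gt (1 / r)
      refine ⟨N, fun n hn => ?_⟩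
      have hεlt : ε n < r := by
        rw [hεdef]
        simp only []
        rw [div_lt_iff₀ (by positivity)]
        have h1r : 1 / r < (n : ℝ) + 1 := by
          calc (1:ℝ)/r < N := hN
          _ ≤ n := by exact_mod_cast hn
          _ < n + 1 := by linarith
        calc (1:ℝ) = r * (1/r) := by field_simp
        _ < r * ((n:ℝ)+1) := by
            exact mul_lt_mul_of_pos_left h1r hr
      have hup : F n ω ≤ Λ ω θ₀ + δ/2 := by
        haveI := hne n
        refine ciSup_le fun θ => ?_
        have hd : dist (θ : Θ) θ₀ < r :=
          lt_of_le_of_lt (Metric.mem_closedBall.1 θ.2) hεlt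
        have h2 := hball hd
        rw [Real.dist_eq] at h2
        have := (abs_lt.1 h2).2
        linarith
      rw [Real.dist_eq, abs_lt]
      constructor
      · linarith [hFlb n]
      · linarith
    exact (Real.continuousAt_log (hpos ω θ₀).ne').tendsto.comp hFt
  -- measurability of the ball suprema
  have hFmeas : ∀ n, AEMeasurable (F n) μ := by
    intro n
    haveI := hne n
    set v : ℕ → Metric.closedBall θ₀ (ε n) := TopologicalSpace.denseSeq _ with hv
    have hvd : DenseRange v := TopologicalSpace.denseRange_denseSeq _
    have hm : Measurable fun ω => ⨆ k, Λ ω (v k).1 :=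
      Measurable.iSup fun k => hmeas (v k).1
    refine hm.aemeasurable.congr ?_
    filter_upwards [hcont] with ω hc
    exact (ciSup_eq_of_denseRange (hcomp n) v hvd hc).symm
  have hfmeas : ∀ n, AEMeasurable (f n) μ := fun n =>
    Real.measurable_log.comp_aemeasurable (hFmeas n)
  -- choice of the truncation level M
  have hBsup : (∫⁻ ω, ENNReal.ofReal (-f₀ ω) ∂μ)
      = ⨆ M : ℕ, ∫⁻ ω, min (ENNReal.ofReal (-f₀ ω)) ((M : ℕ) : ℝ≥0∞) ∂μ := by
    have hs := lintegral_iSup' (μ := μ)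
      (f := fun (M : ℕ) ω => min (ENNReal.ofReal (-f₀ ω)) ((M : ℕ) : ℝ≥0∞))
      (fun M => ((ENNReal.measurable_ofReal.comp hf₀m.neg).min measurable_const).aemeasurable)
      (Filter.Eventually.of_forall fun ω a b hab =>
        min_le_min le_rfl (by exact_mod_cast Nat.cast_le.2 hab))
    rw [← hs]
    exact lintegral_congr fun ω => (iSup_min_nat _ ENNReal.ofReal_ne_top).symm
  obtain ⟨M, hM⟩ := lt_iSup_iff.1 (hBsup ▸ hneg)
  have hIminle : ∀ (g : Ω → ℝ),
      (∫⁻ ω, min (ENNReal.ofReal (-g ω)) ((M : ℕ) : ℝ≥0∞) ∂μ) ≤ ((M : ℕ) : ℝ≥0∞) := by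
    intro g
    calc _ ≤ ∫⁻ _, ((M:ℕ) : ℝ≥0∞) ∂μ := lintegral_mono fun ω => min_le_right _ _
    _ = _ := by simp [lintegral_const]
  have hkey₀ := key_lintegral μ f₀ hf₀m.aemeasurable (M:ℝ) (Nat.cast_nonneg M)
  rw [ENNReal.ofReal_natCast] at hkey₀
  have hlim : (∫⁻ ω, ENNReal.ofReal (f₀ ω + M) ∂μ) < ((M:ℕ):ℝ≥0∞) := by
    have h1 : (∫⁻ ω, ENNReal.ofReal (f₀ ω) ∂μ) + ((M:ℕ):ℝ≥0∞)
        < (∫⁻ ω, min (ENNReal.ofReal (-f₀ ω)) ((M:ℕ):ℝ≥0∞) ∂μ) + ((M:ℕ):ℝ≥0∞) :=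
      (ENNReal.add_lt_add_iff_right (ENNReal.natCast_ne_top M)).2 hM
    rw [← hkey₀] at h1
    rw [add_comm (∫⁻ ω, min (ENNReal.ofReal (-f₀ ω)) ((M:ℕ):ℝ≥0∞) ∂μ) ((M:ℕ):ℝ≥0∞)] at h1
    exact (ENNReal.add_lt_add_iff_right
      (ne_top_of_le_ne_top (ENNReal.natCast_ne_top M) (hIminle f₀))).1 h1
  -- dominated convergence
  have hGM : Integrable (fun ω => G ω + M) μ := hlogplus.add (integrable_const _)
  have hboundfin : (∫⁻ ω, ENNReal.ofReal (G ω + M) ∂μ) ≠ ∞ := by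
    have hle : (∫⁻ ω, ENNReal.ofReal (G ω + M) ∂μ) ≤ ∫⁻ ω, ‖G ω + M‖₊ ∂μ :=
      lintegral_mono fun ω => Real.ofReal_le_enorm _
    exact (lt_of_le_of_lt hle hGM.2).ne
  have hdct : Tendsto (fun n => ∫⁻ ω, ENNReal.ofReal (f n ω + M) ∂μ) atTop
      (𝓝 (∫⁻ ω, ENNReal.ofReal (f₀ ω + M) ∂μ)) := by
    refine tendsto_lintegral_of_dominated_convergence'
      (fun ω => ENNReal.ofReal (G ω + M)) (fun n => ?_) (fun n => ?_) hboundfin ?_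
    · exact ENNReal.measurable_ofReal.comp_aemeasurable ((hfmeas n).add aemeasurable_const)
    · filter_upwards [hptwise] with ω hω
      exact ENNReal.ofReal_le_ofReal (by linarith [hω.1 n])
    · filter_upwards [hptwise] with ω hω
      exact (ENNReal.continuous_ofReal.tendsto _).comp (hω.2.add tendsto_const_nhds)
  obtain ⟨n, hn⟩ := (hdct.eventually_lt_const hlim).exists
  refine ⟨ε n, hεpos n, ?_⟩
  show (∫⁻ ω, ENNReal.ofReal (f n ω) ∂μ) < ∫⁻ ω, ENNReal.ofReal (-f n ω) ∂μ
  have hkeyn := key_lintegral μ (f n) (hfmeas n) (M:ℝ) (Nat.cast_nonneg M)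
  rw [ENNReal.ofReal_natCast] at hkeyn
  have h2 : (∫⁻ ω, ENNReal.ofReal (f n ω + M) ∂μ)
      + (∫⁻ ω, min (ENNReal.ofReal (-f n ω)) ((M:ℕ):ℝ≥0∞) ∂μ)
      < ((M:ℕ):ℝ≥0∞) + (∫⁻ ω, min (ENNReal.ofReal (-f n ω)) ((M:ℕ):ℝ≥0∞) ∂μ) :=
    (ENNReal.add_lt_add_iff_right
      (ne_top_of_le_ne_top (ENNReal.natCast_ne_top M) (hIminle (f n)))).2 hn
  rw [hkeyn, add_comm ((M:ℕ):ℝ≥0∞)] at h2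
  have h3 := (ENNReal.add_lt_add_iff_right (ENNReal.natCast_ne_top M)).1 h2
  exact h3.trans_le (lintegral_mono fun ω => min_le_left _ _)
end

section
/- Let (Z_t)_{t∈ℤ} be an i.i.d. sequence of real random variables with 𝔼|Z₀| < ∞, and let α, γ, δ ∈ ℝ and β ∈ ℝ with |β| < 1. Then for each t ∈ ℤ the series λ_t := α/(1−β) + Σ_{k=1}^{∞} β^{k−1} (γZ_{t−k} + δ|Z_{t−k}|) converges almost surely, the process (λ_t)_{t∈ℤ} is such that λ_t is measurable with respect to σ(Z_{t−1}, Z_{t−2}, …), and almost surely λ_{t+1} = α + β λ_t + γ Z_t + δ |Z_t| for every t ∈ ℤ. -/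
/-!
The terms of the series have `L¹` norms at most `|β| ^ k (|γ| + |δ|) 𝔼|Z₀|`, because the `Z_s` are
identically distributed and integrable; as `|β| < 1` these norms are summable, so the series
converges absolutely almost surely. The `k`-th term is a function of `Z_{t-k-1}` alone, which gives
the measurability of `λ_t` in the past, and shifting the summation index by one turns the series
for `λ_{t+1}` into `γ Z_t + δ |Z_t| + β · (series for λ_t)`; this holds simultaneously for all `t`
outside a null set because `ℤ` is countable.
-/

open MeasureTheory ProbabilityTheory Filter
open scoped ENNReal

theorem ae_summable_geometric_mul_of_eLpNorm_le {Ω : Type*} [MeasurableSpace Ω] {μ : Measure Ω}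
    {X : ℕ → Ω → ℝ} {C : ℝ≥0∞} {β : ℝ} (hX : ∀ k, AEStronglyMeasurable (X k) μ)
    (hXC : ∀ k, eLpNorm (X k) 1 μ ≤ C) (hC : C ≠ ∞) (hβ : |β| < 1) :
    ∀ᵐ ω ∂μ, Summable fun k => β ^ k * X k ω := by
  have hβ' : ‖β‖ₑ < 1 := by simpa [enorm_eq_nnnorm, ← NNReal.coe_lt_one] using hβ
  have hterm : ∀ k, eLpNorm (fun ω => β ^ k * X k ω) 1 μ ≤ ‖β‖ₑ ^ k * C := fun k =>
    calc eLpNorm (fun ω => β ^ k * X k ω) 1 μ = ‖β ^ k‖ₑ * eLpNorm (X k) 1 μ :=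
          eLpNorm_const_smul (β ^ k) (X k) 1 μ
      _ ≤ ‖β‖ₑ ^ k * C := by rw [enorm_pow]; gcongr; exact hXC k
  have hsum : ∑' k, eLpNorm (fun ω => β ^ k * X k ω) 1 μ ≠ ∞ := by
    refine ne_top_of_le_ne_top ?_ (ENNReal.tsum_le_tsum hterm)
    rw [ENNReal.tsum_mul_right, ENNReal.tsum_geometric]
    exact ENNReal.mul_ne_top (ENNReal.inv_ne_top.2 (tsub_pos_of_lt hβ').ne') hC
  filter_upwards [summable_norm_of_tsum_eLpNorm_ne_top le_rfl
    (fun k => (hX k).const_mul (β ^ k)) hsum] with ω hω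
  exact hω.of_norm

theorem ae_summable_geometric_mul_of_identDistrib {Ω Ω' : Type*} [MeasurableSpace Ω]
    [MeasurableSpace Ω'] {μ : Measure Ω} {ν : Measure Ω'} {X : ℕ → Ω → ℝ} {Y : Ω' → ℝ} {β : ℝ}
    (hX : ∀ k, IdentDistrib (X k) Y μ ν) (hY : Integrable Y ν) (hβ : |β| < 1) :
    ∀ᵐ ω ∂μ, Summable fun k => β ^ k * X k ω :=
  ae_summable_geometric_mul_of_eLpNorm_le (fun k => (hX k).aemeasurable_fst.aestronglyMeasurable)
    (fun k => ((hX k).eLpNorm_eq 1).le) (memLp_one_iff_integrable.2 hY).eLpNorm_ne_top hβ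

theorem tsum_pow_mul_shift_succ {β : ℝ} {e : ℤ → ℝ} {t : ℤ}
    (h : Summable fun k : ℕ => β ^ k * e (t - (k + 1))) :
    ∑' k : ℕ, β ^ k * e (t + 1 - (k + 1)) = e t + β * ∑' k : ℕ, β ^ k * e (t - (k + 1)) := by
  have hshift : ∀ k : ℕ, β ^ (k + 1) * e (t + 1 - ((k + 1 : ℕ) + 1)) =
      β * (β ^ k * e (t - (k + 1))) := by
    intro k
    rw [pow_succ', mul_assoc]
    congr 3
    push_cast; ring
  rw [tsum_eq_zero_add' ((h.mul_left β).congr fun k => (hshift k).symm)]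
  simp only [hshift, tsum_mul_left]
  norm_num

theorem egarch_ma_infty_representation_general
    {Ω : Type*} [MeasurableSpace Ω] (μ : Measure Ω)
    (Z : ℤ → Ω → ℝ)
    (hident : ∀ t, IdentDistrib (Z t) (Z 0) μ μ)
    (hint : Integrable (Z 0) μ)
    (α β γ δ : ℝ) (hβ : |β| < 1)
    (lam : ℤ → Ω → ℝ)
    (hlam : ∀ t ω, lam t ω = α / (1 - β) +
      ∑' k : ℕ, β ^ k * (γ * Z (t - (k + 1)) ω + δ * |Z (t - (k + 1)) ω|)) :
    (∀ t : ℤ, ∀ᵐ ω ∂μ, Summable fun k : ℕ =>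
        β ^ k * (γ * Z (t - (k + 1)) ω + δ * |Z (t - (k + 1)) ω|)) ∧
    (∀ t : ℤ, Measurable[⨆ s : {s : ℤ // s < t}, MeasurableSpace.comap (Z s.1) inferInstance]
        (lam t)) ∧
    (∀ᵐ ω ∂μ, ∀ t : ℤ, lam (t + 1) ω = α + β * lam t ω + γ * Z t ω + δ * |Z t ω|) := by
  have hshock : Measurable fun x : ℝ => γ * x + δ * |x| := by fun_prop
  have hsummable : ∀ t : ℤ, ∀ᵐ ω ∂μ, Summable fun k : ℕ =>
      β ^ k * (γ * Z (t - (k + 1)) ω + δ * |Z (t - (k + 1)) ω|) := fun t =>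
    ae_summable_geometric_mul_of_identDistrib (fun k => (hident _).comp hshock)
      ((hint.const_mul γ).add (hint.abs.const_mul δ)) hβ
  refine ⟨hsummable, fun t => ?_, ?_⟩
  · set past := ⨆ s : {s : ℤ // s < t}, MeasurableSpace.comap (Z s.1) inferInstance
    have hZ : ∀ s < t, Measurable[past] (Z s) := fun s hs =>
      measurable_iff_comap_le.2 (le_iSup_of_le (⟨s, hs⟩ : {s : ℤ // s < t}) le_rfl)
    rw [funext (hlam t)]
    refine (Measurable.tsum fun k => ?_).const_add _
    exact (hshock.comp (hZ _ (by omega))).const_mul _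
  · have hβ1 : 1 - β ≠ 0 := by linarith [le_abs_self β]
    filter_upwards [ae_all_iff.2 hsummable] with ω hω t
    rw [hlam, hlam, tsum_pow_mul_shift_succ (e := fun s => γ * Z s ω + δ * |Z s ω|) (hω t)]
    field_simp
    ring

/-- MA(∞) representation of the log squared volatility of the stationary EGARCH(1,1)
model: for an i.i.d. integrable sequence `(Z_t)` and `|β| < 1`, the series
`λ_t = α/(1-β) + Σ_{k≥1} β^{k-1}(γ Z_{t-k} + δ|Z_{t-k}|)` converges a.s., `λ_t` is
measurable w.r.t. `σ(Z_{t-1}, Z_{t-2}, …)`, and a.s. `λ_{t+1} = α + βλ_t + γZ_t + δ|Z_t|`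
for all `t`. -/
theorem egarch_ma_infty_representation
    {Ω : Type*} [MeasurableSpace Ω] (μ : Measure Ω) [IsProbabilityMeasure μ]
    (Z : ℤ → Ω → ℝ) (hZmeas : ∀ t, Measurable (Z t))
    (hindep : iIndepFun Z μ)
    (hident : ∀ t, IdentDistrib (Z t) (Z 0) μ μ)
    (hint : Integrable (Z 0) μ)
    (α β γ δ : ℝ) (hβ : |β| < 1)
    (lam : ℤ → Ω → ℝ)
    (hlam : ∀ t ω, lam t ω = α / (1 - β) +
      ∑' k : ℕ, β ^ k * (γ * Z (t - (k + 1)) ω + δ * |Z (t - (k + 1)) ω|)) :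
    (∀ t : ℤ, ∀ᵐ ω ∂μ, Summable fun k : ℕ =>
        β ^ k * (γ * Z (t - (k + 1)) ω + δ * |Z (t - (k + 1)) ω|)) ∧
    (∀ t : ℤ, Measurable[⨆ s : {s : ℤ // s < t}, MeasurableSpace.comap (Z s.1) inferInstance]
        (lam t)) ∧
    (∀ᵐ ω ∂μ, ∀ t : ℤ, lam (t + 1) ω = α + β * lam t ω + γ * Z t ω + δ * |Z t ω|) :=
  egarch_ma_infty_representation_general μ Z hident hint α β γ δ hβ lam hlam
end

section
/- Let ((U_t, V_t))_{t∈ℤ} be an i.i.d. sequence of pairs, where U_t is a random vector in ℝᵈ and V_t a real random variable, with 𝔼[‖U₀‖²] < ∞ and 𝔼[V₀²] < 1. Then for each t ∈ ℤ the series Y_t := Σ_{j=0}^{∞} (∏_{i=1}^{j} V_{t−i}) · U_{t−j−1} converges almost surely and in L², 𝔼[‖Y_t‖²] < ∞, and almost surely Y_{t+1} = U_t + V_t · Y_t for every t ∈ ℤ. -/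
/-!
The `j`-th summand `(∏_{i=1}^j V_{t-i}) • U_{t-j-1}` is `V_{t-1}` times the `(j-1)`-th summand
at time `t - 1`, and `V_{t-1}` is independent of everything before time `t - 1`; so its `L²` norm
is `‖V₀‖₂ ^ j * ‖U₀‖₂`, a geometric sequence of ratio `‖V₀‖₂ = (𝔼 V₀²)^{1/2} < 1`. A series of
random vectors whose `L^p` norms (`p ≥ 1`) are summable converges almost surely (its `L¹` norms
are summable too) and, by Fatou's lemma, in `L^p`. The recursion comes from splitting off the
summand `j = 0`.
-/

open MeasureTheory ProbabilityTheory Filter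
open scoped ENNReal

section LpSeries

variable {Ω E : Type*} {mΩ : MeasurableSpace Ω} {μ : Measure Ω} [NormedAddCommGroup E]
  {p : ℝ≥0∞} {f : ℕ → Ω → E}

theorem eLpNorm_tsum_le (hp : 1 ≤ p) (hf : ∀ j, AEStronglyMeasurable (f j) μ)
    (hsum : ∀ᵐ ω ∂μ, Summable fun j => f j ω) :
    eLpNorm (fun ω => ∑' j, f j ω) p μ ≤ ∑' j, eLpNorm (f j) p μ :=
  calc eLpNorm (fun ω => ∑' j, f j ω) p μ
      ≤ atTop.liminf fun n => eLpNorm (∑ j ∈ Finset.range n, f j) p μ :=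
        Lp.eLpNorm_lim_le_liminf_eLpNorm
          (fun n => Finset.aestronglyMeasurable_sum _ fun j _ => hf j) _
          (hsum.mono fun ω h => by simpa only [Finset.sum_apply] using h.hasSum.tendsto_sum_nat)
    _ ≤ atTop.liminf fun n => ∑ j ∈ Finset.range n, eLpNorm (f j) p μ :=
        liminf_le_liminf (Eventually.of_forall fun n => eLpNorm_sum_le (fun j _ => hf j) hp)
    _ = ∑' j, eLpNorm (f j) p μ := (ENNReal.tendsto_nat_tsum _).liminf_eq

theorem memLp_tsum_of_tsum_eLpNorm_ne_top (hp : 1 ≤ p) (hf : ∀ j, AEStronglyMeasurable (f j) μ)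
    (hsum : ∀ᵐ ω ∂μ, Summable fun j => f j ω) (h : ∑' j, eLpNorm (f j) p μ ≠ ∞) :
    MemLp (fun ω => ∑' j, f j ω) p μ :=
  ⟨aestronglyMeasurable_of_tendsto_ae atTop
      (fun n => Finset.aestronglyMeasurable_sum _ fun j _ => hf j)
      (hsum.mono fun ω h => by simpa only [Finset.sum_apply] using h.hasSum.tendsto_sum_nat),
    (eLpNorm_tsum_le hp hf hsum).trans_lt h.lt_top⟩

theorem tendsto_eLpNorm_tsum_sub_sum (hp : 1 ≤ p) (hf : ∀ j, AEStronglyMeasurable (f j) μ)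
    (hsum : ∀ᵐ ω ∂μ, Summable fun j => f j ω) (h : ∑' j, eLpNorm (f j) p μ ≠ ∞) :
    Tendsto (fun n => eLpNorm (fun ω => ∑' j, f j ω - ∑ j ∈ Finset.range n, f j ω) p μ)
      atTop (nhds 0) := by
  have htail : ∀ n, eLpNorm (fun ω => ∑' j, f j ω - ∑ j ∈ Finset.range n, f j ω) p μ
      ≤ ∑' j, eLpNorm (f (j + n)) p μ := fun n => by
    calc eLpNorm (fun ω => ∑' j, f j ω - ∑ j ∈ Finset.range n, f j ω) p μ
        = eLpNorm (fun ω => ∑' j, f (j + n) ω) p μ := by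
          refine eLpNorm_congr_ae (hsum.mono fun ω h => ?_)
          simp only [← h.sum_add_tsum_nat_add n, add_sub_cancel_left]
      _ ≤ ∑' j, eLpNorm (f (j + n)) p μ :=
          eLpNorm_tsum_le hp (fun j => hf (j + n))
            (hsum.mono fun ω h => (summable_nat_add_iff n).mpr h)
  exact tendsto_of_tendsto_of_tendsto_of_le_of_le tendsto_const_nhds
    (ENNReal.tendsto_sum_nat_add _ h) (fun n => zero_le) htail

theorem ae_summable_of_tsum_eLpNorm_ne_top [IsProbabilityMeasure μ] [CompleteSpace E]
    (hp : 1 ≤ p) (hf : ∀ j, AEStronglyMeasurable (f j) μ) (h : ∑' j, eLpNorm (f j) p μ ≠ ∞) :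
    ∀ᵐ ω ∂μ, Summable fun j => f j ω := by
  have hint : ∫⁻ ω, ∑' j, ‖f j ω‖ₑ ∂μ ≠ ∞ := by
    rw [lintegral_tsum fun j => (hf j).enorm]
    refine ne_top_of_le_ne_top h (ENNReal.tsum_le_tsum fun j => ?_)
    rw [← eLpNorm_one_eq_lintegral_enorm]
    exact eLpNorm_le_eLpNorm_of_exponent_le hp (hf j)
  filter_upwards [ae_lt_top' (AEMeasurable.tsum fun j => (hf j).enorm) hint] with ω hω
  simp only [enorm_eq_nnnorm] at hω
  exact (ENNReal.tsum_coe_ne_top_iff_summable.mp hω.ne).of_nnnorm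

end LpSeries

theorem eLpNorm_smul_of_indepFun {Ω 𝕜 E : Type*} {mΩ : MeasurableSpace Ω} {μ : Measure Ω}
    [NormedField 𝕜] [MeasurableSpace 𝕜] [OpensMeasurableSpace 𝕜]
    [NormedAddCommGroup E] [NormedSpace 𝕜 E] [MeasurableSpace E] [OpensMeasurableSpace E]
    {r : Ω → 𝕜} {X : Ω → E} {p : ℝ≥0∞} (hp : p ≠ ∞) (hr : AEStronglyMeasurable r μ)
    (hX : AEStronglyMeasurable X μ) (hrX : IndepFun r X μ) :
    eLpNorm (fun ω => r ω • X ω) p μ = eLpNorm r p μ * eLpNorm X p μ := by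
  obtain rfl | hp0 := eq_or_ne p 0
  · simp
  have hq : 0 ≤ 1 / p.toReal := by positivity
  have hind : IndepFun (fun ω => ‖r ω‖ₑ ^ p.toReal) (fun ω => ‖X ω‖ₑ ^ p.toReal) μ :=
    hrX.comp (measurable_enorm.pow_const _) (measurable_enorm.pow_const _)
  simp only [eLpNorm_eq_lintegral_rpow_enorm_toReal hp0 hp, enorm_smul,
    ENNReal.mul_rpow_of_nonneg _ _ ENNReal.toReal_nonneg]
  rw [lintegral_mul_eq_lintegral_mul_lintegral_of_indepFun'' (hr.enorm.pow_const _)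
    (hX.enorm.pow_const _) hind, ENNReal.mul_rpow_of_nonneg _ _ hq]

section LinearSRE

variable {Ω E : Type*} [NormedAddCommGroup E] [NormedSpace ℝ E] {U : ℤ → Ω → E} {V : ℤ → Ω → ℝ}

noncomputable def sreTerm (U : ℤ → Ω → E) (V : ℤ → Ω → ℝ) (t : ℤ) (j : ℕ) (ω : Ω) : E :=
  (∏ i ∈ Finset.Icc 1 j, V (t - i) ω) • U (t - (j + 1)) ω

theorem sreTerm_zero (t : ℤ) : sreTerm U V t 0 = U (t - 1) := by
  ext ω
  simp [sreTerm]

theorem sreTerm_succ (t : ℤ) (j : ℕ) (ω : Ω) :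
    sreTerm U V (t + 1) (j + 1) ω = V t ω • sreTerm U V t j ω := by
  have hprod : ∏ i ∈ Finset.Icc 1 (j + 1), V (t + 1 - i) ω
      = V t ω * ∏ i ∈ Finset.Icc 1 j, V (t - i) ω := by
    simp only [← Finset.Ico_add_one_right_eq_Icc, Finset.prod_Ico_eq_prod_range,
      Finset.prod_range_succ', add_tsub_cancel_right]
    push_cast
    ring_nf
  rw [sreTerm, sreTerm, smul_smul, hprod]
  push_cast
  ring_nf

theorem tsum_sreTerm_succ {t : ℤ} {ω : Ω} (h : Summable fun j => sreTerm U V (t + 1) j ω) :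
    ∑' j, sreTerm U V (t + 1) j ω = U t ω + V t ω • ∑' j, sreTerm U V t j ω := by
  rw [h.tsum_eq_zero_add, sreTerm_zero, add_sub_cancel_right]
  simp only [sreTerm_succ, tsum_const_smul'']

variable [MeasurableSpace E] [BorelSpace E] {mΩ : MeasurableSpace Ω} {μ : Measure Ω}

theorem measurable_sreTerm {m : MeasurableSpace Ω} {t : ℤ} (hU : ∀ s < t, Measurable[m] (U s))
    (hV : ∀ s < t, Measurable[m] (V s)) (j : ℕ) : Measurable[m] (sreTerm U V t j) :=
  (Finset.measurable_prod _ fun i hi => hV _ (by rw [Finset.mem_Icc] at hi; omega)).smul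
    (hU _ (by omega))

theorem indepFun_sreTerm (hmeas : ∀ t, Measurable fun ω => (U t ω, V t ω))
    (hindep : iIndepFun (fun t ω => (U t ω, V t ω)) μ) (t : ℤ) (j : ℕ) :
    IndepFun (V t) (sreTerm U V t j) μ := by
  let X : ℤ → Ω → E × ℝ := fun s ω => (U s ω, V s ω)
  let past : MeasurableSpace Ω := ⨆ s ∈ Set.Iio t, MeasurableSpace.comap (X s) inferInstance
  have hpair : ∀ s < t, Measurable[past] (X s) := fun s hs =>
    (comap_measurable (X s)).mono (le_biSup (fun s => MeasurableSpace.comap (X s) inferInstance) hs)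
      le_rfl
  have hpast : Indep (⨆ s ∈ ({t} : Set ℤ), MeasurableSpace.comap (X s) inferInstance) past μ :=
    indep_iSup_of_disjoint (fun s => (hmeas s).comap_le) hindep.iIndep
      (Set.disjoint_singleton_left.mpr (lt_irrefl t))
  rw [IndepFun_iff_Indep]
  refine indep_of_indep_of_le_right (indep_of_indep_of_le_left hpast ?_) ?_
  · rw [iSup_singleton]
    exact (comap_measurable (X t)).snd.comap_le
  · exact (measurable_sreTerm (fun s hs => (hpair s hs).fst) (fun s hs => (hpair s hs).snd)
      j).comap_le

theorem eLpNorm_sreTerm [SecondCountableTopology E]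
    (hmeas : ∀ t, Measurable fun ω => (U t ω, V t ω))
    (hindep : iIndepFun (fun t ω => (U t ω, V t ω)) μ)
    (hident : ∀ t, IdentDistrib (fun ω => (U t ω, V t ω)) (fun ω => (U 0 ω, V 0 ω)) μ μ)
    {p : ℝ≥0∞} (hp : p ≠ ∞) (t : ℤ) (j : ℕ) :
    eLpNorm (sreTerm U V t j) p μ = eLpNorm (V 0) p μ ^ j * eLpNorm (U 0) p μ := by
  have hV : ∀ s, Measurable (V s) := fun s => (hmeas s).snd
  have hVeq : ∀ s, eLpNorm (V s) p μ = eLpNorm (V 0) p μ := fun s =>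
    ((hident s).comp measurable_snd).eLpNorm_eq p
  induction j generalizing t with
  | zero =>
    rw [sreTerm_zero, pow_zero, one_mul]
    exact ((hident (t - 1)).comp measurable_fst).eLpNorm_eq p
  | succ j ih =>
    obtain ⟨s, rfl⟩ : ∃ s, t = s + 1 := ⟨t - 1, by ring⟩
    have hT : Measurable (sreTerm U V s j) :=
      measurable_sreTerm (fun s _ => (hmeas s).fst) (fun s _ => hV s) j
    rw [funext (sreTerm_succ s j), eLpNorm_smul_of_indepFun hp (hV s).aestronglyMeasurable
      hT.aestronglyMeasurable (indepFun_sreTerm hmeas hindep s j), ih, hVeq, pow_succ, mul_assoc,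
      mul_left_comm]

end LinearSRE

/-- Existence and second-order stationarity of the solution of the linear SRE
`Y_{t+1} = U_t + V_t Y_t` for i.i.d. pairs `(U_t, V_t)` with `𝔼‖U₀‖² < ∞` and
`𝔼[V₀²] < 1`: the series `Y_t = Σ_{j≥0} (∏_{i=1}^j V_{t-i}) U_{t-j-1}` converges a.s.
and in `L²`, has finite second moment, and a.s. satisfies the recursion. -/
theorem linear_sre_second_order_solution
    {Ω : Type*} [MeasurableSpace Ω] (μ : Measure Ω) [IsProbabilityMeasure μ]
    {d : ℕ} (U : ℤ → Ω → EuclideanSpace ℝ (Fin d)) (V : ℤ → Ω → ℝ)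
    (hmeas : ∀ t : ℤ, Measurable fun ω => (U t ω, V t ω))
    (hindep : iIndepFun (fun t ω => (U t ω, V t ω)) μ)
    (hident : ∀ t : ℤ, IdentDistrib (fun ω => (U t ω, V t ω)) (fun ω => (U 0 ω, V 0 ω)) μ μ)
    (hU2 : Integrable (fun ω => ‖U 0 ω‖ ^ 2) μ)
    (hV2 : Integrable (fun ω => (V 0 ω) ^ 2) μ)
    (hVlt : ∫ ω, (V 0 ω) ^ 2 ∂μ < 1)
    (Y : ℤ → Ω → EuclideanSpace ℝ (Fin d))
    (hY : ∀ t ω, Y t ω =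
      ∑' j : ℕ, (∏ i ∈ Finset.Icc 1 j, V (t - i) ω) • U (t - (j + 1)) ω) :
    (∀ t : ℤ, ∀ᵐ ω ∂μ, Summable fun j : ℕ =>
        (∏ i ∈ Finset.Icc 1 j, V (t - i) ω) • U (t - (j + 1)) ω) ∧
    (∀ t : ℤ, Tendsto (fun n : ℕ =>
        eLpNorm (fun ω => Y t ω - ∑ j ∈ Finset.range n,
          (∏ i ∈ Finset.Icc 1 j, V (t - i) ω) • U (t - (j + 1)) ω) 2 μ)
        atTop (nhds 0)) ∧
    (∀ t : ℤ, Integrable (fun ω => ‖Y t ω‖ ^ 2) μ) ∧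
    (∀ᵐ ω ∂μ, ∀ t : ℤ, Y (t + 1) ω = U t ω + V t ω • Y t ω) := by
  have hTm : ∀ t j, AEStronglyMeasurable (sreTerm U V t j) μ := fun t j =>
    (measurable_sreTerm (fun s _ => (hmeas s).fst) (fun s _ => (hmeas s).snd)
      j).aestronglyMeasurable
  have hV : MemLp (V 0) 2 μ :=
    (memLp_two_iff_integrable_sq (hmeas 0).snd.aestronglyMeasurable).2 hV2
  have hU : MemLp (U 0) 2 μ :=
    (memLp_two_iff_integrable_sq_norm (hmeas 0).fst.aestronglyMeasurable).2 hU2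
  have hVlt1 : eLpNorm (V 0) 2 μ < 1 := by
    rw [hV.eLpNorm_eq_integral_rpow_norm two_ne_zero ENNReal.ofNat_ne_top, ENNReal.ofReal_lt_one]
    simp only [ENNReal.toReal_ofNat, Real.norm_eq_abs, Real.rpow_two, sq_abs]
    exact Real.rpow_lt_one (integral_nonneg fun ω => sq_nonneg _) hVlt (by norm_num)
  have hsum : ∀ t, ∑' j, eLpNorm (sreTerm U V t j) 2 μ ≠ ∞ := fun t => by
    simp_rw [eLpNorm_sreTerm hmeas hindep hident ENNReal.ofNat_ne_top t]
    rw [ENNReal.tsum_mul_right, ENNReal.tsum_geometric]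
    exact ENNReal.mul_ne_top (ENNReal.inv_ne_top.2 (tsub_pos_of_lt hVlt1).ne') hU.eLpNorm_ne_top
  have hsumm : ∀ t, ∀ᵐ ω ∂μ, Summable fun j => sreTerm U V t j ω := fun t =>
    ae_summable_of_tsum_eLpNorm_ne_top one_le_two (hTm t) (hsum t)
  have hYt : ∀ t, Y t = fun ω => ∑' j, sreTerm U V t j ω := fun t => funext (hY t)
  refine ⟨hsumm, fun t => ?_, fun t => ?_, ?_⟩
  · rw [hYt]
    exact tendsto_eLpNorm_tsum_sub_sum one_le_two (hTm t) (hsumm t) (hsum t)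
  · rw [hYt]
    exact (memLp_tsum_of_tsum_eLpNorm_ne_top one_le_two (hTm t) (hsumm t)
      (hsum t)).integrable_norm_pow two_ne_zero
  · filter_upwards [ae_all_iff.2 hsumm] with ω hω t
    rw [hY, hY]
    exact tsum_sreTerm_succ (hω (t + 1))
end

section
/- Let Θ be a compact metric space, (Ω, ℱ, μ) a probability space, T : Ω → Ω an ergodic measure-preserving map, and θ₀ ∈ Θ. Let l : Ω × Θ → ℝ be such that: (i) for μ-almost every ω, θ ↦ l(ω, θ) is continuous; (ii) there is a constant m ∈ ℝ with l(ω, θ) ≥ m for all θ and a.e. ω; (iii) 𝔼[|l(·, θ₀)|] < ∞; (iv) for every θ ≠ θ₀, 𝔼[l(·, θ)] > 𝔼[l(·, θ₀)] (where the left-hand side may equal +∞). Let (l̂_t)_{t≥1} be random functions on Θ, continuous in θ, such that sup_{θ∈Θ} (1/n) Σ_{t=1}^{n} |l̂_t(ω, θ) − l(Tᵗω, θ)| → 0 almost surely as n → ∞. Then any sequence of measurable minimizers θ̂_n(ω) ∈ argmin_{θ∈Θ} Σ_{t=1}^{n} l̂_t(ω, θ) converges almost surely to θ₀. -/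
/-!
Birkhoff's ergodic theorem, derived from the maximal ergodic theorem, makes the time averages of
`l(·, θ₀)` converge a.s. to `L₀ = 𝔼 l(·, θ₀)`. Wald's argument bounds them away from `L₀`
elsewhere: for `θ ≠ θ₀`, monotone convergence over shrinking balls turns identifiability into an
integrable minorant `u` of `l` on a neighbourhood of `θ` with `𝔼 u > L₀`, and compactness of
`{θ | ε ≤ dist θ θ₀}` yields some `b > L₀` that the time averages of `l` eventually exceed on the
whole set. The observed criterion is uniformly within `o(1)` of the time average, so its
minimizer eventually lies in the `ε`-ball around `θ₀`.
-/

open MeasureTheory Filter Topology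
open scoped ENNReal

lemma frequently_mul_add_lt_of_lt {t : ℕ → ℝ} {q q' : ℝ} (hq : q' < q) (c c' : ℝ)
    (h : ∃ᶠ n in atTop, q * n + c < t n) : ∃ᶠ n in atTop, q' * n + c' < t n := by
  have hev : ∀ᶠ n : ℕ in atTop, q' * n + c' ≤ q * n + c := by
    filter_upwards [(tendsto_natCast_atTop_atTop.const_mul_atTop (sub_pos.2 hq)).eventually_ge_atTop
      (c' - c)] with n hn
    linarith
  exact (h.and_eventually hev).mono fun n ⟨h₁, h₂⟩ ↦ h₂.trans_lt h₁

lemma exists_rat_frequently_mul_add_lt {t : ℕ → ℝ} {a : ℝ} {c : ℚ → ℝ} (c' : ℚ → ℝ)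
    (h : ∃ q : ℚ, a < q ∧ ∃ᶠ n in atTop, q * n + c q < t n) :
    ∃ q : ℚ, a < q ∧ ∃ᶠ n in atTop, q * n + c' q < t n := by
  obtain ⟨q, haq, hq⟩ := h
  obtain ⟨q', haq', hq'q⟩ := exists_rat_btwn haq
  exact ⟨q', haq', frequently_mul_add_lt_of_lt (by exact_mod_cast hq'q) _ _ hq⟩

lemma Dense.iInf₂_inter_le {X α : Type*} [TopologicalSpace X] [CompleteLinearOrder α]
    [TopologicalSpace α] [OrderClosedTopology α] {D U : Set X} {g : X → α} (hD : Dense D)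
    (hU : IsOpen U) (hg : Continuous g) {x : X} (hx : x ∈ U) :
    ⨅ p ∈ D ∩ U, g p ≤ g x := by
  have hclosed : IsClosed {y | ⨅ p ∈ D ∩ U, g p ≤ g y} := isClosed_le continuous_const hg
  refine closure_minimal (fun p (hp : p ∈ D ∩ U) ↦ show p ∈ {y | ⨅ p ∈ D ∩ U, g p ≤ g y} from
    iInf₂_le p hp) hclosed ?_
  rw [Set.inter_comm]
  exact hD.open_subset_closure_inter hU hx

lemma ContinuousAt.le_iSup_iInf₂_inter_ball {X α : Type*} [PseudoMetricSpace X]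
    [CompleteLinearOrder α] [DenselyOrdered α] [TopologicalSpace α] [OrderTopology α]
    {D : Set X} {g : X → α} {x : X} (hg : ContinuousAt g x) :
    g x ≤ ⨆ k : ℕ, ⨅ p ∈ D ∩ Metric.ball x (1 / (k + 1)), g p := by
  refine le_of_forall_lt_imp_le_of_dense fun b hb ↦ ?_
  obtain ⟨k, -, hk⟩ := (Metric.nhds_basis_ball_inv_nat_succ.eventually_iff).1
    (hg.eventually (lt_mem_nhds hb))
  exact le_iSup_of_le k (le_iInf₂ fun p hp ↦ (hk hp.2).le)

lemma tendstoUniformly_zero_of_abs_le_of_tendsto_iSup {ι Θ : Type*} {p : Filter ι}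
    {H G : ι → Θ → ℝ} (hbdd : ∀ i, BddAbove (Set.range (G i))) (hle : ∀ i θ, |H i θ| ≤ G i θ)
    (hG : Tendsto (fun i ↦ ⨆ θ, G i θ) p (𝓝 0)) : TendstoUniformly H 0 p := by
  refine Metric.tendstoUniformly_iff.2 fun ε hε ↦ ?_
  filter_upwards [hG.eventually (eventually_lt_nhds hε)] with i hi θ
  rw [Pi.zero_apply, dist_zero_left, Real.norm_eq_abs]
  exact ((hle i θ).trans (le_ciSup (hbdd i) θ)).trans_lt hi

lemma eventually_notMem_of_isMinOn {ι Θ : Type*} {p : Filter ι} {F Fhat : ι → Θ → ℝ}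
    {x : ι → Θ} {θ₀ : Θ} {K : Set Θ} {a b : ℝ}
    (hunif : TendstoUniformly (fun i θ ↦ Fhat i θ - F i θ) 0 p)
    (hmin : ∀ i θ, Fhat i (x i) ≤ Fhat i θ)
    (hθ₀ : ∀ᶠ i in p, F i θ₀ < a) (hK : ∀ᶠ i in p, ∀ θ ∈ K, b < F i θ) (hab : a < b) :
    ∀ᶠ i in p, x i ∉ K := by
  filter_upwards [Metric.tendstoUniformly_iff.1 hunif ((b - a) / 2) (by linarith), hθ₀, hK]
    with i hi hi₀ hiK hxK
  have h₁ := hi (x i)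
  have h₂ := hi θ₀
  simp only [Pi.zero_apply, Real.dist_eq, zero_sub, abs_neg, abs_lt] at h₁ h₂
  linarith [hmin i θ₀, hiK (x i) hxK]

lemma exists_lt_integral_of_lt_lintegral {Ω : Type*} [MeasurableSpace Ω] {μ : Measure Ω}
    [IsFiniteMeasure μ] {f : Ω → ℝ≥0∞} (hf : Measurable f) {c : ℝ}
    (hc : ENNReal.ofReal c < ∫⁻ ω, f ω ∂μ) :
    ∃ g : Ω → ℝ, Measurable g ∧ Integrable g μ ∧ (∀ ω, ENNReal.ofReal (g ω) ≤ f ω) ∧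
      c < ∫ ω, g ω ∂μ := by
  have hsup : ⨆ K : ℕ, ∫⁻ ω, f ω ⊓ K ∂μ = ∫⁻ ω, f ω ∂μ := by
    rw [← lintegral_iSup' (fun K ↦ (hf.min measurable_const).aemeasurable)
      (Eventually.of_forall fun ω K K' h ↦ inf_le_inf_left _ (by exact_mod_cast h))]
    simp only [← inf_iSup_eq, ENNReal.iSup_natCast, inf_top_eq]
  obtain ⟨K, hK⟩ := lt_iSup_iff.1 (hsup ▸ hc)
  have hfK : ∀ ω, f ω ⊓ K < ⊤ := fun ω ↦ inf_le_right.trans_lt (ENNReal.natCast_lt_top K)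
  have hfin : ∫⁻ ω, f ω ⊓ K ∂μ ≠ ⊤ :=
    (lintegral_mono fun ω ↦ inf_le_right).trans_lt (by simp [ENNReal.mul_lt_top]) |>.ne
  refine ⟨fun ω ↦ (f ω ⊓ K).toReal, (hf.min measurable_const).ennreal_toReal, ?_,
    fun ω ↦ (ENNReal.ofReal_toReal (hfK ω).ne).trans_le inf_le_left, ?_⟩
  · refine Integrable.of_bound (hf.min measurable_const).ennreal_toReal.aestronglyMeasurable K
      (Eventually.of_forall fun ω ↦ ?_)
    rw [Real.norm_of_nonneg ENNReal.toReal_nonneg]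
    exact ENNReal.toReal_le_of_le_ofReal (Nat.cast_nonneg K) (by simp)
  · rw [integral_toReal (hf.min measurable_const).aemeasurable (Eventually.of_forall hfK)]
    rcases lt_or_ge c 0 with hc0 | hc0
    · exact hc0.trans_le ENNReal.toReal_nonneg
    · exact (ENNReal.ofReal_lt_iff_lt_toReal hc0 hfin).1 hK

lemma birkhoffSum_apply_eq_sum_Icc {Ω M : Type*} [AddCommMonoid M] (T : Ω → Ω) (f : Ω → M)
    (n : ℕ) (ω : Ω) : birkhoffSum T f n (T ω) = ∑ t ∈ Finset.Icc 1 n, f (T^[t] ω) := by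
  simp only [birkhoffSum, ← Function.iterate_succ_apply, Nat.succ_eq_add_one, Finset.range_eq_Ico]
  rw [Finset.sum_Ico_add' (fun t ↦ f (T^[t] ω)), Finset.Ico_add_one_right_eq_Icc, zero_add]

section Birkhoff

variable {Ω : Type*} {T : Ω → Ω} {f : Ω → ℝ}

noncomputable def birkhoffMax (T : Ω → Ω) (f : Ω → ℝ) : ℕ → Ω → ℝ
  | 0 => 0
  | N + 1 => birkhoffMax T f N ⊔ birkhoffSum T f (N + 1)

lemma birkhoffSum_le_birkhoffMax {n N : ℕ} (h : n ≤ N) (ω : Ω) :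
    birkhoffSum T f n ω ≤ birkhoffMax T f N ω := by
  induction N with
  | zero => simp [Nat.le_zero.1 h, birkhoffMax]
  | succ N ih =>
    rcases h.lt_or_eq with h | rfl
    · exact (ih (Nat.lt_succ_iff.1 h)).trans le_sup_left
    · exact le_sup_right

lemma birkhoffMax_nonneg (N : ℕ) (ω : Ω) : 0 ≤ birkhoffMax T f N ω := by
  simpa using birkhoffSum_le_birkhoffMax (T := T) (f := f) N.zero_le ω

lemma exists_birkhoffMax_eq (N : ℕ) (ω : Ω) :
    ∃ n ≤ N, birkhoffMax T f N ω = birkhoffSum T f n ω := by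
  induction N with
  | zero => exact ⟨0, le_rfl, by simp [birkhoffMax]⟩
  | succ N ih =>
    obtain ⟨n, hn, heq⟩ := ih
    rcases le_total (birkhoffMax T f N ω) (birkhoffSum T f (N + 1) ω) with h | h
    · exact ⟨N + 1, le_rfl, sup_eq_right.2 h⟩
    · exact ⟨n, hn.trans N.le_succ, (sup_eq_left.2 h).trans heq⟩

lemma monotone_birkhoffMax (ω : Ω) : Monotone fun N ↦ birkhoffMax T f N ω :=
  monotone_nat_of_le_succ fun _ ↦ le_sup_left

lemma birkhoffMax_sub_birkhoffMax_comp_le_indicator (N : ℕ) (ω : Ω) :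
    birkhoffMax T f N ω - birkhoffMax T f N (T ω) ≤
      {x | 0 < birkhoffMax T f N x}.indicator f ω := by
  by_cases hpos : 0 < birkhoffMax T f N ω
  · rw [Set.indicator_of_mem (show ω ∈ {x | 0 < birkhoffMax T f N x} from hpos)]
    obtain ⟨n, hn, heq⟩ := exists_birkhoffMax_eq (T := T) (f := f) N ω
    obtain ⟨k, rfl⟩ : ∃ k, n = k + 1 :=
      Nat.exists_eq_succ_of_ne_zero fun h ↦ by simp [h, heq] at hpos
    have := birkhoffSum_le_birkhoffMax (T := T) (f := f) (Nat.le_of_succ_le hn) (T ω)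
    rw [heq, birkhoffSum_succ']
    linarith
  · rw [Set.indicator_of_notMem (show ω ∉ {x | 0 < birkhoffMax T f N x} from hpos)]
    linarith [birkhoffMax_nonneg (T := T) (f := f) N (T ω)]

/-- The points where `limsup (birkhoffSum T f n ω / n) > a`; the witness slope is taken rational
so that the set is measurable. -/
def birkhoffLimsupGtSet (T : Ω → Ω) (f : Ω → ℝ) (a : ℝ) : Set Ω :=
  {ω | ∃ q : ℚ, a < q ∧ ∃ᶠ n in atTop, (q : ℝ) * n < birkhoffSum T f n ω}

lemma preimage_birkhoffLimsupGtSet (T : Ω → Ω) (f : Ω → ℝ) (a : ℝ) :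
    T ⁻¹' birkhoffLimsupGtSet T f a = birkhoffLimsupGtSet T f a := by
  ext ω
  -- both conditions compare `q * n` with `birkhoffSum T f (n + 1) ω` up to a bounded error,
  -- which passing to a smaller rational slope absorbs
  have hshift : ∀ q : ℚ, (∃ᶠ n in atTop, (q : ℝ) * n < birkhoffSum T f n ω) ↔
      ∃ᶠ n in atTop, (q : ℝ) * n + q < birkhoffSum T f (n + 1) ω := by
    intro q
    conv_lhs => rw [← map_add_atTop_eq_nat 1]
    rw [frequently_map]
    push_cast
    simp only [mul_add, mul_one]
  have hcomp : ∀ q : ℚ, (∃ᶠ n in atTop, (q : ℝ) * n < birkhoffSum T f n (T ω)) ↔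
      ∃ᶠ n in atTop, (q : ℝ) * n + f ω < birkhoffSum T f (n + 1) ω := by
    intro q
    simp only [birkhoffSum_succ']
    constructor <;> intro h <;> exact h.mono fun n hn ↦ by linarith
  simp only [birkhoffLimsupGtSet, Set.mem_preimage, Set.mem_ofPred_eq, hshift, hcomp]
  exact ⟨exists_rat_frequently_mul_add_lt _, exists_rat_frequently_mul_add_lt _⟩

variable [MeasurableSpace Ω] {μ : Measure Ω}

lemma measurable_birkhoffSum (hT : Measurable T) (hf : Measurable f) (n : ℕ) :
    Measurable (birkhoffSum T f n) :=
  Finset.measurable_sum _ fun k _ ↦ hf.comp (hT.iterate k)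

lemma measurable_birkhoffMax (hT : Measurable T) (hf : Measurable f) (N : ℕ) :
    Measurable (birkhoffMax T f N) := by
  induction N with
  | zero => exact measurable_const
  | succ N ih => exact ih.sup (measurable_birkhoffSum hT hf _)

lemma integrable_birkhoffSum (hT : MeasurePreserving T μ μ) (hf : Integrable f μ) (n : ℕ) :
    Integrable (birkhoffSum T f n) μ :=
  integrable_finsetSum _ fun k _ ↦ (hT.iterate k).integrable_comp_of_integrable hf

lemma integrable_birkhoffMax (hT : MeasurePreserving T μ μ) (hf : Integrable f μ) (N : ℕ) :
    Integrable (birkhoffMax T f N) μ := by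
  induction N with
  | zero => exact integrable_zero _ _ _
  | succ N ih => exact ih.sup (integrable_birkhoffSum hT hf _)

lemma measurableSet_birkhoffLimsupGtSet (hT : Measurable T) (hf : Measurable f) (a : ℝ) :
    MeasurableSet (birkhoffLimsupGtSet T f a) := by
  simp only [birkhoffLimsupGtSet, frequently_atTop]
  refine Measurable.setOf (Measurable.exists fun q ↦ measurable_const.and
    (Measurable.forall fun N ↦ Measurable.exists fun n ↦ measurable_const.and ?_))
  exact (measurableSet_lt measurable_const (measurable_birkhoffSum hT hf n)).mem

lemma setIntegral_birkhoffMax_pos_nonneg (hT : MeasurePreserving T μ μ) (hf : Measurable f)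
    (hfi : Integrable f μ) (N : ℕ) :
    0 ≤ ∫ ω in {ω | 0 < birkhoffMax T f N ω}, f ω ∂μ := by
  have hM := integrable_birkhoffMax hT hfi N
  have hMT : Integrable (fun ω ↦ birkhoffMax T f N (T ω)) μ := hT.integrable_comp_of_integrable hM
  have hA : MeasurableSet {ω | 0 < birkhoffMax T f N ω} :=
    measurableSet_lt measurable_const (measurable_birkhoffMax hT.measurable hf N)
  calc 0 = ∫ ω, (birkhoffMax T f N ω - birkhoffMax T f N (T ω)) ∂μ := by
        rw [integral_sub hM hMT, ← integral_map hT.measurable.aemeasurable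
          (by rw [hT.map_eq]; exact hM.aestronglyMeasurable), hT.map_eq, sub_self]
    _ ≤ ∫ ω, {x | 0 < birkhoffMax T f N x}.indicator f ω ∂μ :=
        integral_mono (hM.sub hMT) (hfi.indicator hA)
          (birkhoffMax_sub_birkhoffMax_comp_le_indicator N)
    _ = ∫ ω in {ω | 0 < birkhoffMax T f N ω}, f ω ∂μ := integral_indicator hA

theorem setIntegral_exists_birkhoffSum_pos_nonneg (hT : MeasurePreserving T μ μ)
    (hf : Measurable f) (hfi : Integrable f μ) :
    0 ≤ ∫ ω in {ω | ∃ n, 0 < birkhoffSum T f n ω}, f ω ∂μ := by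
  have hunion : {ω | ∃ n, 0 < birkhoffSum T f n ω} = ⋃ N, {ω | 0 < birkhoffMax T f N ω} := by
    ext ω
    simp only [Set.mem_ofPred_eq, Set.mem_iUnion]
    constructor
    · exact fun ⟨n, hn⟩ ↦ ⟨n, hn.trans_le (birkhoffSum_le_birkhoffMax le_rfl ω)⟩
    · rintro ⟨N, hN⟩
      obtain ⟨n, -, heq⟩ := exists_birkhoffMax_eq (T := T) (f := f) N ω
      exact ⟨n, heq ▸ hN⟩
  rw [hunion]
  refine ge_of_tendsto' (tendsto_setIntegral_of_monotone (fun N ↦ ?_)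
    (fun _ _ h _ hω ↦ hω.trans_le (monotone_birkhoffMax _ h)) hfi.integrableOn)
    (setIntegral_birkhoffMax_pos_nonneg hT hf hfi)
  exact measurableSet_lt measurable_const (measurable_birkhoffMax hT.measurable hf N)

lemma MeasureTheory.MeasurePreserving.ae_forall_iterate (hT : MeasurePreserving T μ μ)
    {p : Ω → Prop} (h : ∀ᵐ ω ∂μ, p ω) : ∀ᵐ ω ∂μ, ∀ t, p (T^[t] ω) :=
  ae_all_iff.2 fun t ↦ (hT.iterate t).quasiMeasurePreserving.ae h

variable [IsProbabilityMeasure μ]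

lemma ae_notMem_birkhoffLimsupGtSet (hT : Ergodic T μ) (hf : Measurable f) (hfi : Integrable f μ)
    {a : ℝ} (ha : ∫ ω, f ω ∂μ < a) : ∀ᵐ ω ∂μ, ω ∉ birkhoffLimsupGtSet T f a := by
  refine (hT.ae_mem_or_ae_notMem (measurableSet_birkhoffLimsupGtSet hT.measurable hf a)
    (preimage_birkhoffLimsupGtSet T f a)).resolve_left fun hE ↦ ?_
  set g : Ω → ℝ := fun ω ↦ f ω - a
  have hgi : Integrable g μ := hfi.sub (integrable_const a)
  have hB : ∀ᵐ ω ∂μ, ω ∈ {ω | ∃ n, 0 < birkhoffSum T g n ω} := by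
    filter_upwards [hE] with ω ⟨q, haq, hq⟩
    obtain ⟨n, hn, hlt⟩ := frequently_atTop.1 hq 1
    refine ⟨n, ?_⟩
    have hsum : birkhoffSum T g n ω = birkhoffSum T f n ω - n * a := by
      simp [g, birkhoffSum, Finset.sum_sub_distrib]
    have : a * n ≤ q * n := mul_le_mul_of_nonneg_right haq.le (Nat.cast_nonneg n)
    have : (1 : ℝ) ≤ n := by exact_mod_cast hn
    nlinarith
  have hmax := setIntegral_exists_birkhoffSum_pos_nonneg (f := g) hT.toMeasurePreserving
    (hf.sub measurable_const) hgi
  rw [Measure.restrict_eq_self_of_ae_mem hB, integral_sub hfi (integrable_const a)] at hmax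
  simp only [integral_const, probReal_univ, smul_eq_mul, one_mul, sub_nonneg] at hmax
  linarith

lemma ae_eventually_birkhoffSum_le (hT : Ergodic T μ) (hf : Measurable f) (hfi : Integrable f μ)
    {b : ℝ} (hb : ∫ ω, f ω ∂μ < b) : ∀ᵐ ω ∂μ, ∀ᶠ n in atTop, birkhoffSum T f n ω ≤ b * n := by
  obtain ⟨a, hfa, hab⟩ := exists_between hb
  obtain ⟨q, haq, hqb⟩ := exists_rat_btwn hab
  filter_upwards [ae_notMem_birkhoffLimsupGtSet hT hf hfi hfa] with ω hω
  have := not_frequently.1 fun h ↦ hω ⟨q, haq, h⟩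
  exact this.mono fun n hn ↦ (not_lt.1 hn).trans
    (mul_le_mul_of_nonneg_right hqb.le (Nat.cast_nonneg n))

lemma ae_eventually_birkhoffAverage_lt (hT : Ergodic T μ) (hf : Measurable f)
    (hfi : Integrable f μ) :
    ∀ᵐ ω ∂μ, ∀ b, ∫ ω, f ω ∂μ < b → ∀ᶠ n in atTop, birkhoffAverage ℝ T f n ω < b := by
  have hrat : ∀ᵐ ω ∂μ, ∀ q : ℚ, ∫ ω, f ω ∂μ < q →
      ∀ᶠ n in atTop, birkhoffSum T f n ω ≤ q * n := by
    refine ae_all_iff.2 fun q ↦ ?_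
    by_cases hq : ∫ ω, f ω ∂μ < q
    · exact (ae_eventually_birkhoffSum_le hT hf hfi hq).mono fun _ h _ ↦ h
    · exact Eventually.of_forall fun _ h ↦ absurd h hq
  filter_upwards [hrat] with ω hω b hb
  obtain ⟨q, hfq, hqb⟩ := exists_rat_btwn hb
  filter_upwards [hω q hfq, eventually_gt_atTop 0] with n hn hpos
  have hpos : (0 : ℝ) < n := by exact_mod_cast hpos
  rw [birkhoffAverage, smul_eq_mul, inv_mul_lt_iff₀ hpos]
  linarith [mul_lt_mul_of_pos_right hqb hpos]

theorem ae_tendsto_birkhoffAverage (hT : Ergodic T μ) (hf : Measurable f) (hfi : Integrable f μ) :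
    ∀ᵐ ω ∂μ, Tendsto (birkhoffAverage ℝ T f · ω) atTop (𝓝 (∫ ω, f ω ∂μ)) := by
  filter_upwards [ae_eventually_birkhoffAverage_lt hT hf hfi,
    ae_eventually_birkhoffAverage_lt hT hf.neg hfi.neg] with ω hup hlow
  refine tendsto_order.2 ⟨fun b hb ↦ ?_, hup⟩
  refine (hlow (-b) (by simp only [Pi.neg_apply, integral_neg]; linarith)).mono fun n hn ↦ ?_
  rw [birkhoffAverage_neg] at hn
  exact neg_lt_neg_iff.1 hn

lemma ae_tendsto_inv_mul_sum_Icc_iterate (hT : Ergodic T μ) (hf : Measurable f)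
    (hfi : Integrable f μ) :
    ∀ᵐ ω ∂μ, Tendsto (fun n : ℕ ↦ (n : ℝ)⁻¹ * ∑ t ∈ Finset.Icc 1 n, f (T^[t] ω)) atTop
      (𝓝 (∫ ω, f ω ∂μ)) := by
  filter_upwards [hT.toMeasurePreserving.quasiMeasurePreserving.ae
    (ae_tendsto_birkhoffAverage hT hf hfi)] with ω hω
  simpa [birkhoffAverage, birkhoffSum_apply_eq_sum_Icc] using hω

end Birkhoff

section Wald

variable {Θ Ω : Type*} [MeasurableSpace Ω] {μ : Measure Ω} [IsProbabilityMeasure μ]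

lemma exists_integrable_minorant_of_lt_lintegral [MetricSpace Θ]
    [TopologicalSpace.SeparableSpace Θ] {l : Ω → Θ → ℝ} {m c : ℝ} {θ : Θ}
    (hmeas : ∀ θ, Measurable fun ω ↦ l ω θ) (hcont : ∀ᵐ ω ∂μ, Continuous (l ω))
    (hlb : ∀ᵐ ω ∂μ, ∀ θ, m ≤ l ω θ)
    (hc : ENNReal.ofReal (c - m) < ∫⁻ ω, ENNReal.ofReal (l ω θ - m) ∂μ) :
    ∃ U ∈ 𝓝 θ, ∃ u : Ω → ℝ, Measurable u ∧ Integrable u μ ∧ c < ∫ ω, u ω ∂μ ∧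
      ∀ᵐ ω ∂μ, ∀ θ' ∈ U, u ω ≤ l ω θ' := by
  obtain ⟨D, hDc, hD⟩ := TopologicalSpace.exists_countable_dense Θ
  -- infima over a countable dense set are measurable, and a.s. equal the infima over the balls
  set V : ℕ → Ω → ℝ≥0∞ :=
    fun k ω ↦ ⨅ p ∈ D ∩ Metric.ball θ (1 / (k + 1)), ENNReal.ofReal (l ω p - m)
  have hV : ∀ k, Measurable (V k) := fun k ↦ Measurable.biInf _ (hDc.mono Set.inter_subset_left)
    fun p _ ↦ ((hmeas p).sub measurable_const).ennreal_ofReal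
  have hcont' : ∀ᵐ ω ∂μ, Continuous fun θ ↦ ENNReal.ofReal (l ω θ - m) :=
    hcont.mono fun ω h ↦ ENNReal.continuous_ofReal.comp (h.sub continuous_const)
  have hVle : ∀ᵐ ω ∂μ, ∀ k : ℕ, ∀ θ' ∈ Metric.ball θ (1 / (k + 1)),
      V k ω ≤ ENNReal.ofReal (l ω θ' - m) :=
    hcont'.mono fun ω h k θ' hθ' ↦ hD.iInf₂_inter_le Metric.isOpen_ball h hθ'
  have hsup : ⨆ k, ∫⁻ ω, V k ω ∂μ = ∫⁻ ω, ENNReal.ofReal (l ω θ - m) ∂μ := by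
    rw [← lintegral_iSup' (fun k ↦ (hV k).aemeasurable) (Eventually.of_forall fun ω k k' h ↦
      biInf_mono fun p hp ↦ ⟨hp.1, Metric.ball_subset_ball
        (one_div_le_one_div_of_le (by positivity) (by exact_mod_cast Nat.succ_le_succ h)) hp.2⟩)]
    refine lintegral_congr_ae ?_
    filter_upwards [hVle, hcont'] with ω hle h
    exact le_antisymm (iSup_le fun k ↦ hle k θ (Metric.mem_ball_self (by positivity)))
      h.continuousAt.le_iSup_iInf₂_inter_ball
  obtain ⟨k, hk⟩ := lt_iSup_iff.1 (hsup ▸ hc)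
  obtain ⟨g, hgm, hgi, hgV, hgc⟩ := exists_lt_integral_of_lt_lintegral (hV k) hk
  refine ⟨Metric.ball θ (1 / (k + 1)), Metric.ball_mem_nhds θ (by positivity), fun ω ↦ m + g ω,
    measurable_const.add hgm, (integrable_const m).add hgi, ?_, ?_⟩
  · rw [integral_add (integrable_const m) hgi]
    simp only [integral_const, probReal_univ, smul_eq_mul, one_mul]
    linarith
  · filter_upwards [hVle, hlb] with ω hle hm θ' hθ'
    have := (ENNReal.ofReal_le_ofReal_iff (sub_nonneg.2 (hm θ'))).1 ((hgV ω).trans (hle k θ' hθ'))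
    linarith

lemma exists_ae_eventually_lt_timeAverage_of_isCompact [TopologicalSpace Θ] {T : Ω → Ω}
    (hT : Ergodic T μ) {l : Ω → Θ → ℝ} {K : Set Θ} (hK : IsCompact K) {c : ℝ}
    (hloc : ∀ θ ∈ K, ∃ U ∈ 𝓝 θ, ∃ u : Ω → ℝ, Measurable u ∧ Integrable u μ ∧
      c < ∫ ω, u ω ∂μ ∧ ∀ᵐ ω ∂μ, ∀ θ' ∈ U, u ω ≤ l ω θ') :
    ∃ b > c, ∀ᵐ ω ∂μ, ∀ᶠ n : ℕ in atTop, ∀ θ ∈ K,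
      b < (n : ℝ)⁻¹ * ∑ t ∈ Finset.Icc 1 n, l (T^[t] ω) θ := by
  refine hK.induction_on ?_ (fun s t hst ht ↦ ?_) (fun s t hs ht ↦ ?_) fun θ hθ ↦ ?_
  · exact ⟨c + 1, by linarith, Eventually.of_forall fun _ ↦ Eventually.of_forall
      fun _ θ hθ ↦ absurd hθ (Set.notMem_empty θ)⟩
  · obtain ⟨b, hb, h⟩ := ht
    exact ⟨b, hb, h.mono fun _ h' ↦ h'.mono fun _ h'' θ hθ ↦ h'' θ (hst hθ)⟩
  · obtain ⟨b, hb, hs⟩ := hs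
    obtain ⟨b', hb', ht⟩ := ht
    refine ⟨min b b', lt_min hb hb', ?_⟩
    filter_upwards [hs, ht] with ω hs ht
    filter_upwards [hs, ht] with n hs ht θ hθ
    rcases hθ with hθ | hθ
    · exact (min_le_left _ _).trans_lt (hs θ hθ)
    · exact (min_le_right _ _).trans_lt (ht θ hθ)
  · obtain ⟨U, hU, u, hum, hui, hcu, hul⟩ := hloc θ hθ
    refine ⟨U, mem_nhdsWithin_of_mem_nhds hU, (c + ∫ ω, u ω ∂μ) / 2, by linarith, ?_⟩
    filter_upwards [ae_tendsto_inv_mul_sum_Icc_iterate hT hum hui,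
      hT.toMeasurePreserving.ae_forall_iterate hul] with ω hω hωl
    filter_upwards [hω.eventually (eventually_gt_nhds (by linarith : (c + ∫ ω, u ω ∂μ) / 2 <
      ∫ ω, u ω ∂μ))] with n hn θ' hθ'
    exact hn.trans_le (mul_le_mul_of_nonneg_left
      (Finset.sum_le_sum fun t _ ↦ hωl t θ' hθ') (by positivity))

end Wald

lemma ae_tendstoUniformly_inv_mul_sum_sub {Θ Ω : Type*} [TopologicalSpace Θ] [CompactSpace Θ]
    [MeasurableSpace Ω] {μ : Measure Ω} {T : Ω → Ω} (hT : MeasurePreserving T μ μ)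
    {l : Ω → Θ → ℝ} {lhat : ℕ → Ω → Θ → ℝ} (hlcont : ∀ᵐ ω ∂μ, Continuous (l ω))
    (hlhatcont : ∀ t ω, Continuous (lhat t ω))
    (happrox : ∀ᵐ ω ∂μ, Tendsto
      (fun n : ℕ ↦ ⨆ θ, (n : ℝ)⁻¹ * ∑ t ∈ Finset.Icc 1 n, |lhat t ω θ - l (T^[t] ω) θ|)
      atTop (𝓝 0)) :
    ∀ᵐ ω ∂μ, TendstoUniformly (fun (n : ℕ) θ ↦ (n : ℝ)⁻¹ * ∑ t ∈ Finset.Icc 1 n, lhat t ω θ -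
      (n : ℝ)⁻¹ * ∑ t ∈ Finset.Icc 1 n, l (T^[t] ω) θ) 0 atTop := by
  filter_upwards [hT.ae_forall_iterate hlcont, happrox] with ω hcont hω
  refine tendstoUniformly_zero_of_abs_le_of_tendsto_iSup (fun n ↦ ?_) (fun n θ ↦ ?_) hω
  · refine (isCompact_range (continuous_const.mul (continuous_finsetSum _ fun t _ ↦ ?_))).bddAbove
    exact ((hlhatcont t ω).sub (hcont t)).abs
  · rw [← mul_sub, ← Finset.sum_sub_distrib, abs_mul, abs_of_nonneg (by positivity)]
    exact mul_le_mul_of_nonneg_left (Finset.abs_sum_le_sum_abs _ _) (by positivity)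

theorem qmle_strong_consistency_general
    {Θ : Type*} [MetricSpace Θ] [CompactSpace Θ]
    {Ω : Type*} [MeasurableSpace Ω] (μ : Measure Ω) [IsProbabilityMeasure μ]
    (T : Ω → Ω) (hT : Ergodic T μ) (θ₀ : Θ)
    (l : Ω → Θ → ℝ)
    (hlmeas : ∀ θ, Measurable fun ω => l ω θ)
    (hlcont : ∀ᵐ ω ∂μ, Continuous (l ω))
    (m : ℝ) (hlb : ∀ᵐ ω ∂μ, ∀ θ, m ≤ l ω θ)
    (hint : Integrable (fun ω => l ω θ₀) μ)
    (hident : ∀ θ, θ ≠ θ₀ →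
      ENNReal.ofReal (∫ ω, (l ω θ₀ - m) ∂μ) < ∫⁻ ω, ENNReal.ofReal (l ω θ - m) ∂μ)
    (lhat : ℕ → Ω → Θ → ℝ)
    (hlhatcont : ∀ t ω, Continuous (lhat t ω))
    (happrox : ∀ᵐ ω ∂μ, Tendsto
      (fun n : ℕ => ⨆ θ, (n : ℝ)⁻¹ * ∑ t ∈ Finset.Icc 1 n, |lhat t ω θ - l (T^[t] ω) θ|)
      atTop (nhds 0))
    (θhat : ℕ → Ω → Θ)
    (hmin : ∀ n ω, ∀ θ : Θ, ∑ t ∈ Finset.Icc 1 n, lhat t ω (θhat n ω) ≤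
      ∑ t ∈ Finset.Icc 1 n, lhat t ω θ) :
    ∀ᵐ ω ∂μ, Tendsto (fun n => θhat n ω) atTop (nhds θ₀) := by
  set L₀ := ∫ ω, l ω θ₀ ∂μ
  have hgap : ∀ θ, θ ≠ θ₀ →
      ENNReal.ofReal (L₀ - m) < ∫⁻ ω, ENNReal.ofReal (l ω θ - m) ∂μ := by
    simpa [integral_sub hint (integrable_const m)] using hident
  have hsep : ∀ j : ℕ, ∃ b > L₀, ∀ᵐ ω ∂μ, ∀ᶠ n : ℕ in atTop,
      ∀ θ ∈ {θ | 1 / ((j : ℝ) + 1) ≤ dist θ θ₀},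
        b < (n : ℝ)⁻¹ * ∑ t ∈ Finset.Icc 1 n, l (T^[t] ω) θ := fun j ↦
    exists_ae_eventually_lt_timeAverage_of_isCompact hT
      (isClosed_le continuous_const (continuous_id.dist continuous_const)).isCompact
      fun θ hθ ↦ exists_integrable_minorant_of_lt_lintegral hlmeas hlcont hlb
        (hgap θ fun h ↦ by simp [h] at hθ; linarith)
  choose b hbL hb using hsep
  filter_upwards [ae_all_iff.2 hb, ae_tendsto_inv_mul_sum_Icc_iterate hT (hlmeas θ₀) hint,
    ae_tendstoUniformly_inv_mul_sum_sub hT.toMeasurePreserving hlcont hlhatcont happrox]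
    with ω hbω hθ₀ hunif
  refine Metric.nhds_basis_ball_inv_nat_succ.tendsto_right_iff.2 fun j _ ↦ ?_
  have hL₀b : L₀ < (L₀ + b j) / 2 := by linarith [hbL j]
  refine (eventually_notMem_of_isMinOn hunif
    (fun n θ ↦ mul_le_mul_of_nonneg_left (hmin n ω θ) (by positivity))
    (hθ₀.eventually (eventually_lt_nhds hL₀b)) (hbω j) (by linarith)).mono fun n hn ↦ ?_
  exact Metric.mem_ball.2 (not_le.1 hn)

/-- Generic strong consistency of the QMLE on a continuously invertible domain
(Theorem 1 of the paper in M-estimation form): under a.e. continuity of the limit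
criterion, a uniform lower bound, integrability at `θ₀`, identifiability (with the
expectation at `θ ≠ θ₀` possibly `+∞`, expressed via the lower integral of the shifted
nonnegative integrand), and uniform Cesàro approximation of the stationary ergodic
criterion by the observed one, any sequence of measurable minimizers of the observed
criterion converges a.s. to `θ₀`. -/
theorem qmle_strong_consistency
    {Θ : Type*} [MetricSpace Θ] [CompactSpace Θ] [MeasurableSpace Θ] [BorelSpace Θ]
    {Ω : Type*} [MeasurableSpace Ω] (μ : Measure Ω) [IsProbabilityMeasure μ]
    (T : Ω → Ω) (hT : Ergodic T μ) (θ₀ : Θ)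
    (l : Ω → Θ → ℝ)
    (hlmeas : ∀ θ, Measurable fun ω => l ω θ)
    (hlcont : ∀ᵐ ω ∂μ, Continuous (l ω))
    (m : ℝ) (hlb : ∀ᵐ ω ∂μ, ∀ θ, m ≤ l ω θ)
    (hint : Integrable (fun ω => l ω θ₀) μ)
    (hident : ∀ θ, θ ≠ θ₀ →
      ENNReal.ofReal (∫ ω, (l ω θ₀ - m) ∂μ) < ∫⁻ ω, ENNReal.ofReal (l ω θ - m) ∂μ)
    (lhat : ℕ → Ω → Θ → ℝ)
    (hlhatcont : ∀ t ω, Continuous (lhat t ω))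
    (happrox : ∀ᵐ ω ∂μ, Tendsto
      (fun n : ℕ => ⨆ θ, (n : ℝ)⁻¹ * ∑ t ∈ Finset.Icc 1 n, |lhat t ω θ - l (T^[t] ω) θ|)
      atTop (nhds 0))
    (θhat : ℕ → Ω → Θ) (hθmeas : ∀ n, Measurable (θhat n))
    (hmin : ∀ n ω, ∀ θ : Θ, ∑ t ∈ Finset.Icc 1 n, lhat t ω (θhat n ω) ≤
      ∑ t ∈ Finset.Icc 1 n, lhat t ω θ) :
    ∀ᵐ ω ∂μ, Tendsto (fun n => θhat n ω) atTop (nhds θ₀) :=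
  qmle_strong_consistency_general μ T hT θ₀ l hlmeas hlcont m hlb hint hident lhat hlhatcont happrox
    θhat hmin
end

section
/- Let Θ be a compact subset of ℝ⁴ such that every θ = (α, β, γ, δ) ∈ Θ satisfies β > 0, β < 1 and δ ≥ |γ|, and let X be a real random variable with 𝔼[log⁺|X|] < ∞. Define Λ(θ) = max{β, 2^{−1}(γX + δ|X|)·exp(−2^{−1}α/(1−β)) − β}. Then 𝔼[sup_{θ∈Θ} |log Λ(θ)|] < ∞. -/
/-!
On the compact set `Θ` the parameter `β` is bounded below by some `b > 0` and the slope of `Λ`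
in `|x|` is bounded, so `b ≤ Λ(θ) ≤ C · max 1 |X|` uniformly in `θ`; taking logarithms,
`sup_θ |log Λ(θ)| ≤ |log b| + |log C| + log⁺ X`. The supremum is measurable because `Λ` is
continuous in `θ`, so it may be taken over a countable dense subset of `Θ`.
-/

open MeasureTheory Real

theorem measurable_iSup_of_continuous {ι Ω : Type*} [TopologicalSpace ι]
    [TopologicalSpace.SeparableSpace ι] [MeasurableSpace Ω] {f : ι → Ω → ℝ}
    (hcont : ∀ ω, Continuous fun i => f i ω) (hmeas : ∀ i, Measurable (f i)) :
    Measurable fun ω => ⨆ i, f i ω := by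
  obtain ⟨D, hDc, hD⟩ := TopologicalSpace.exists_countable_dense ι
  have : Countable D := hDc.to_subtype
  simp_rw [← hD.ciSup' (hcont _)]
  exact Measurable.iSup fun d => hmeas d

theorem abs_log_le_of_le_of_le_mul_max_one {b C y x : ℝ} (hb : 0 < b) (hC : 0 < C)
    (hby : b ≤ y) (hyC : y ≤ C * max 1 |x|) :
    |log y| ≤ |log b| + |log C| + log⁺ x := by
  have hlow : log b ≤ log y := log_le_log hb hby
  have hup : log y ≤ log C + log⁺ x := calc
    log y ≤ log (C * max 1 |x|) := log_le_log (hb.trans_le hby) hyC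
    _ = log C + log⁺ x := by
      rw [log_mul hC.ne' (by positivity), ← posLog_eq_log_max_one (abs_nonneg x), posLog_abs]
  rw [abs_le]
  constructor <;> linarith [neg_abs_le (log b), le_abs_self (log C), abs_nonneg (log C),
    abs_nonneg (log b), posLog_nonneg (x := x)]

/-- `Λ(θ)` at the innovation `x`, where `θ = (α, β, γ, δ)`. -/
noncomputable def egarchLipschitzCoeff (θ : ℝ × ℝ × ℝ × ℝ) (x : ℝ) : ℝ :=
  max θ.2.1 (2⁻¹ * (θ.2.2.1 * x + θ.2.2.2 * |x|) * exp (-2⁻¹ * θ.1 / (1 - θ.2.1)) - θ.2.1)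

noncomputable def egarchSlope (θ : ℝ × ℝ × ℝ × ℝ) : ℝ :=
  2⁻¹ * (|θ.2.2.1| + |θ.2.2.2|) * exp (-2⁻¹ * θ.1 / (1 - θ.2.1))

theorem egarchLipschitzCoeff_le {θ : ℝ × ℝ × ℝ × ℝ} (hβ : 0 ≤ θ.2.1) (x : ℝ) :
    egarchLipschitzCoeff θ x ≤ max θ.2.1 (egarchSlope θ * |x|) := by
  have hγ : θ.2.2.1 * x ≤ |θ.2.2.1| * |x| := by rw [← abs_mul]; exact le_abs_self _
  have hδ : θ.2.2.2 * |x| ≤ |θ.2.2.2| * |x| := by gcongr; exact le_abs_self _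
  have hsum : 2⁻¹ * (θ.2.2.1 * x + θ.2.2.2 * |x|) * exp (-2⁻¹ * θ.1 / (1 - θ.2.1))
      ≤ egarchSlope θ * |x| := by
    have := exp_pos (-2⁻¹ * θ.1 / (1 - θ.2.1))
    unfold egarchSlope
    nlinarith
  exact max_le_max le_rfl (by linarith)

theorem continuousOn_exp_neg_half_div_one_sub :
    ContinuousOn (fun θ : ℝ × ℝ × ℝ × ℝ => exp (-2⁻¹ * θ.1 / (1 - θ.2.1))) {θ | θ.2.1 ≠ 1} :=
  fun θ hθ => ContinuousAt.continuousWithinAt <| by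
    fun_prop (disch := exact sub_ne_zero.mpr (Ne.symm hθ))

theorem continuousOn_egarchLipschitzCoeff (x : ℝ) :
    ContinuousOn (fun θ => egarchLipschitzCoeff θ x) {θ | θ.2.1 ≠ 1} := by
  unfold egarchLipschitzCoeff
  have := continuousOn_exp_neg_half_div_one_sub
  fun_prop

theorem exists_bounds_egarchLipschitzCoeff {Θ : Set (ℝ × ℝ × ℝ × ℝ)} (hΘc : IsCompact Θ)
    (hΘ : ∀ θ ∈ Θ, 0 < θ.2.1 ∧ θ.2.1 < 1) :
    ∃ b > 0, ∃ C > 0, ∀ θ ∈ Θ, ∀ x,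
      b ≤ egarchLipschitzCoeff θ x ∧ egarchLipschitzCoeff θ x ≤ C * max 1 |x| := by
  have hΘ1 : Θ ⊆ {θ | θ.2.1 ≠ 1} := fun θ hθ => (hΘ θ hθ).2.ne
  obtain ⟨b, hb, hβb⟩ := hΘc.exists_forall_le' (f := fun θ => θ.2.1)
    (by fun_prop) fun θ hθ => (hΘ θ hθ).1
  obtain ⟨M, hM⟩ := hΘc.bddAbove_image (f := egarchSlope) <| ContinuousOn.mul
    (by fun_prop) (continuousOn_exp_neg_half_div_one_sub.mono hΘ1)
  refine ⟨b, hb, max 1 M, by positivity, fun θ hθ x => ⟨le_max_of_le_left (hβb θ hθ), ?_⟩⟩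
  have hslope : egarchSlope θ ≤ max 1 M := (hM ⟨θ, hθ, rfl⟩).trans (le_max_right _ _)
  have hx : |x| ≤ max 1 |x| := le_max_right _ _
  have hone : 1 ≤ max 1 M * max 1 |x| :=
    one_le_mul_of_one_le_of_one_le (le_max_left _ _) (le_max_left _ _)
  refine (egarchLipschitzCoeff_le (hΘ θ hθ).1.le x).trans (max_le ?_ ?_)
  · linarith [(hΘ θ hθ).2]
  · gcongr

/-- Uniform integrability over a compact parameter set `Θ ⊆ ℝ⁴` (with `0 < β < 1` and
`δ ≥ |γ|` on `Θ`) of the logarithm of the Lipschitz coefficient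
`Λ(θ) = max{β, 2⁻¹(γX + δ|X|)exp(-2⁻¹α/(1-β)) - β}` of the inverted EGARCH(1,1) map,
under `𝔼[log⁺|X|] < ∞`: one has `𝔼[sup_{θ∈Θ} |log Λ(θ)|] < ∞`. -/
theorem uniform_log_moment_lipschitz_coefficient
    {Ω : Type*} [MeasurableSpace Ω] (μ : Measure Ω) [IsProbabilityMeasure μ]
    (Θ : Set (ℝ × ℝ × ℝ × ℝ)) (hΘc : IsCompact Θ)
    (hΘ : ∀ θ ∈ Θ, 0 < θ.2.1 ∧ θ.2.1 < 1 ∧ |θ.2.2.1| ≤ θ.2.2.2)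
    (X : Ω → ℝ) (hXmeas : Measurable X)
    (hlog : Integrable (fun ω => max (Real.log |X ω|) 0) μ) :
    Integrable (fun ω => ⨆ θ : Θ, |Real.log (max θ.1.2.1
      (2⁻¹ * (θ.1.2.2.1 * X ω + θ.1.2.2.2 * |X ω|) *
        Real.exp (-2⁻¹ * θ.1.1 / (1 - θ.1.2.1)) - θ.1.2.1))|) μ := by
  change Integrable (fun ω => ⨆ θ : Θ, |log (egarchLipschitzCoeff θ (X ω))|) μ
  obtain ⟨b, hb, C, hC, hΛ⟩ :=
    exists_bounds_egarchLipschitzCoeff hΘc fun θ hθ => ⟨(hΘ θ hθ).1, (hΘ θ hθ).2.1⟩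
  have hΛpos (θ : Θ) (x : ℝ) : egarchLipschitzCoeff θ x ≠ 0 :=
    (hb.trans_le (hΛ θ θ.2 x).1).ne'
  have hbound (θ : Θ) (ω : Ω) :
      |log (egarchLipschitzCoeff θ (X ω))| ≤ |log b| + |log C| + log⁺ (X ω) :=
    abs_log_le_of_le_of_le_mul_max_one hb hC (hΛ θ θ.2 (X ω)).1 (hΛ θ θ.2 (X ω)).2
  have hdom : Integrable (fun ω => |log b| + |log C| + log⁺ (X ω)) μ :=
    (integrable_const _).add (hlog.congr (ae_of_all _ fun ω => by
      simp only [posLog_apply, log_abs, max_comm]))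
  have hcont (x : ℝ) : Continuous fun θ : Θ => |log (egarchLipschitzCoeff θ x)| :=
    ((continuousOn_egarchLipschitzCoeff x).comp_continuous continuous_subtype_val
      fun θ : Θ => (hΘ θ θ.2).2.1.ne).log (hΛpos · x) |>.abs
  have hmeas (θ : Θ) : Measurable fun ω => |log (egarchLipschitzCoeff θ (X ω))| := by
    unfold egarchLipschitzCoeff
    fun_prop
  have : TopologicalSpace.SeparableSpace Θ := hΘc.isSeparable.separableSpace
  have hsup := measurable_iSup_of_continuous (fun ω => hcont (X ω)) hmeas
  refine hdom.mono' hsup.aestronglyMeasurable (ae_of_all _ fun ω => ?_)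
  rw [norm_of_nonneg (Real.iSup_nonneg fun _ => abs_nonneg _)]
  exact Real.iSup_le (hbound · ω) (add_nonneg (by positivity) posLog_nonneg)
end
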